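/- arXiv:1808.10832 — 4 statements merged into one kernel-verified Lean document; each statement's English description precedes it below -/
import Mathlib

section
/- Let G be a transitive permutation group on a finite set Ω and let Δ be a subset of Ω of cardinality k such that |Δ^G| > |Σ^G| for every subset Σ of Ω of cardinality k+1 containing Δ. Then for every subset Σ of Ω of cardinality k+1 containing Δ one has k+1 ≥ |Δ^{G_Σ}| > |Σ^{G_Δ}| ≥ 1, where Δ^{G_Σ} is the orbit of Δ under the setwise stabilizer of Σ and Σ^{G_Δ} is the orbit of Σ under the setwise stabilizer of Δ. -/
open Pointwise MulAction

private theorem nat_card_orbit_stab {α : Type*} {β : Type*} [Group α] [MulAction α β] (b : β) :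
    Nat.card (orbit α b) * Nat.card (stabilizer α b) = Nat.card α := by
  rw [← Nat.card_prod]
  exact Nat.card_congr (orbitProdStabilizerEquivGroup α b)

/-- **Siemons–Wagner.** If `G` is transitive on `Ω` and `Δ` is a `k`-subset whose orbit is
longer than the orbit of every `(k+1)`-subset containing it, then for every such `(k+1)`-subset
`Σ` one has `k + 1 ≥ |Δ^{G_Σ}| > |Σ^{G_Δ}| ≥ 1`. -/
theorem siemons_wagner_stabilizer_orbit_bounds
    {Ω : Type*} [Fintype Ω] [DecidableEq Ω] (G : Subgroup (Equiv.Perm Ω))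
    (hG : IsPretransitive G Ω) (k : ℕ) (Δ : Finset Ω) (hΔ : Δ.card = k)
    (h : ∀ S : Finset Ω, Δ ⊆ S → S.card = k + 1 →
      Nat.card (orbit G S) < Nat.card (orbit G Δ)) :
    ∀ S : Finset Ω, Δ ⊆ S → S.card = k + 1 →
      Nat.card (orbit (stabilizer G S) Δ) ≤ k + 1 ∧
      Nat.card (orbit (stabilizer G Δ) S) < Nat.card (orbit (stabilizer G S) Δ) ∧
      1 ≤ Nat.card (orbit (stabilizer G Δ) S) := by
  intro S hsub hcard
  classical
  have hstabeq : Nat.card (stabilizer (stabilizer G S) Δ)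
      = Nat.card (stabilizer (stabilizer G Δ) S) := by
    apply Nat.card_congr
    exact ⟨fun x => ⟨⟨(x : stabilizer G S), x.2⟩, x.1.2⟩,
      fun x => ⟨⟨(x : stabilizer G Δ), x.2⟩, x.1.2⟩, fun x => rfl, fun x => rfl⟩
  have t1 := nat_card_orbit_stab (α := G) Δ
  have t2 := nat_card_orbit_stab (α := stabilizer G Δ) S
  have t3 := nat_card_orbit_stab (α := G) S
  have t4 := nat_card_orbit_stab (α := stabilizer G S) Δ
  have e1 : Nat.card (orbit G Δ) * (Nat.card (orbit (stabilizer G Δ) S)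
      * Nat.card (stabilizer (stabilizer G Δ) S)) = Nat.card G := by rw [t2, t1]
  have e2 : Nat.card (orbit G S) * (Nat.card (orbit (stabilizer G S) Δ)
      * Nat.card (stabilizer (stabilizer G S) Δ)) = Nat.card G := by rw [t4, t3]
  haveI : Nonempty (orbit (stabilizer G Δ) S) := ⟨⟨S, mem_orbit_self S⟩⟩
  haveI : Nonempty (orbit (stabilizer G S) Δ) := ⟨⟨Δ, mem_orbit_self Δ⟩⟩
  haveI : Nonempty (stabilizer (stabilizer G Δ) S) := ⟨1⟩
  have px : 0 < Nat.card (orbit (stabilizer G Δ) S) := Nat.card_pos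
  have py : 0 < Nat.card (orbit (stabilizer G S) Δ) := Nat.card_pos
  have pc : 0 < Nat.card (stabilizer (stabilizer G Δ) S) := Nat.card_pos
  have key : Nat.card (orbit G Δ) * Nat.card (orbit (stabilizer G Δ) S)
      = Nat.card (orbit G S) * Nat.card (orbit (stabilizer G S) Δ) := by
    have heq := e1.trans e2.symm
    rw [hstabeq, ← mul_assoc, ← mul_assoc] at heq
    exact Nat.eq_of_mul_eq_mul_right pc heq
  have hb : Nat.card (orbit G S) < Nat.card (orbit G Δ) := h S hsub hcard
  refine ⟨?_, ?_, px⟩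
  · have hsubset : orbit (stabilizer G S) Δ ⊆ ↑(S.powersetCard k) := by
      rintro T ⟨g, rfl⟩
      rw [Finset.mem_coe, Finset.mem_powersetCard]
      refine ⟨?_, by rw [Finset.card_smul_finset, hΔ]⟩
      have h1 : g • Δ ⊆ g • S := Finset.smul_finset_subset_smul_finset hsub
      have h2 : g • S = S := g.2
      rwa [h2] at h1
    calc Nat.card (orbit (stabilizer G S) Δ) = (orbit (stabilizer G S) Δ).ncard :=
          Nat.card_coe_set_eq _
      _ ≤ (↑(S.powersetCard k) : Set (Finset Ω)).ncard :=
          Set.ncard_le_ncard hsubset (Set.toFinite _)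
      _ = (S.powersetCard k).card := Set.ncard_coe_finset _
      _ = k + 1 := by rw [Finset.card_powersetCard, hcard, Nat.choose_succ_self_right]
  · by_contra hle
    push_neg at hle
    have hcontr : Nat.card (orbit G Δ) * Nat.card (orbit (stabilizer G Δ) S)
        < Nat.card (orbit G Δ) * Nat.card (orbit (stabilizer G Δ) S) :=
      calc Nat.card (orbit G Δ) * Nat.card (orbit (stabilizer G Δ) S)
          = Nat.card (orbit G S) * Nat.card (orbit (stabilizer G S) Δ) := key
        _ ≤ Nat.card (orbit G S) * Nat.card (orbit (stabilizer G Δ) S) :=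
            Nat.mul_le_mul_left _ hle
        _ < Nat.card (orbit G Δ) * Nat.card (orbit (stabilizer G Δ) S) :=
            (Nat.mul_lt_mul_right px).mpr hb
    exact lt_irrefl _ hcontr
end

section
/- Let G be a transitive permutation group on a finite set Ω and let Δ be a subset of Ω of cardinality k ≥ 2 such that |Δ^G| > |Σ^G| for every subset Σ of Ω of cardinality k+1 containing Δ. Then either (1) every 2-element subset of Ω is contained in some G-image of Δ, or (2) G is imprimitive: there is a G-invariant block system with blocks B₁,…,B_r satisfying 1 < |B_i| < |Ω|, each block intersects Δ in at most one point, and every 2-element subset {α_i, α_j} with α_i ∈ B_i, α_j ∈ B_j and B_i ≠ B_j is contained in some G-image of Δ. -/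
open Pointwise MulAction

/-- Exchange lemma: if the orbit of every `(k+1)`-superset of `Δ` is shorter than the
orbit of `Δ`, then for every `x ∉ Δ` there is an image of `Δ` inside `insert x Δ`
different from `Δ`. -/
private lemma sw_exchange {Ω : Type*} [Fintype Ω] [DecidableEq Ω]
    (G : Subgroup (Equiv.Perm Ω)) (k : ℕ) (Δ : Finset Ω)
    (h : ∀ S : Finset Ω, Δ ⊆ S → S.card = k + 1 →
      Nat.card (orbit G S) < Nat.card (orbit G Δ))
    (hΔ : Δ.card = k) {x : Ω} (hx : x ∉ Δ) :
    ∃ g : G, g • Δ ⊆ insert x Δ ∧ g • Δ ≠ Δ := by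
  by_contra hc
  push_neg at hc
  have key := h (insert x Δ) (Finset.subset_insert _ _)
    (by rw [Finset.card_insert_of_notMem hx, hΔ])
  have huniq : ∀ g a : G, a • Δ ⊆ g • (insert x Δ) → a • Δ = g • Δ := by
    intro g a hsub
    have h1 : (g⁻¹ * a) • Δ ⊆ insert x Δ := by
      rw [mul_smul]
      intro y hy
      have : y ∈ g⁻¹ • (g • (insert x Δ)) :=
        Finset.smul_finset_subset_smul_finset hsub hy
      rwa [inv_smul_smul] at this
    have h2 := hc (g⁻¹ * a) h1
    calc a • Δ = g • ((g⁻¹ * a) • Δ) := by rw [← mul_smul, mul_inv_cancel_left]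
      _ = g • Δ := by rw [h2]
  have hle : Nat.card (orbit G Δ) ≤ Nat.card (orbit G (insert x Δ)) := by
    have hmem : ∀ S : orbit G (insert x Δ), ∃ g : G, g • (insert x Δ) = (S : Finset Ω) :=
      fun S => mem_orbit_iff.mp S.2
    choose σ hσ using hmem
    refine Nat.card_le_card_of_surjective
      (fun S : orbit G (insert x Δ) => (⟨σ S • Δ, mem_orbit _ _⟩ : orbit G Δ)) ?_
    rintro ⟨T, hT⟩
    obtain ⟨a, ha⟩ := mem_orbit_iff.mp hT
    refine ⟨⟨a • (insert x Δ), mem_orbit _ _⟩, ?_⟩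
    set S : orbit G (insert x Δ) := ⟨a • (insert x Δ), mem_orbit _ _⟩
    have h1 : σ S • Δ ⊆ a • (insert x Δ) := by
      have := Finset.smul_finset_subset_smul_finset (a := σ S)
        (Finset.subset_insert x Δ)
      rwa [hσ S] at this
    have h2 : σ S • Δ = a • Δ := huniq a (σ S) h1
    simp only [Subtype.mk.injEq]
    rw [h2, ha]
  omega

/-- Exchange lemma for an arbitrary image of `Δ`. -/
private lemma sw_exchange' {Ω : Type*} [Fintype Ω] [DecidableEq Ω]
    (G : Subgroup (Equiv.Perm Ω)) (k : ℕ) (Δ : Finset Ω)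
    (h : ∀ S : Finset Ω, Δ ⊆ S → S.card = k + 1 →
      Nat.card (orbit G S) < Nat.card (orbit G Δ))
    (hΔ : Δ.card = k) (g : G) {x : Ω} (hx : x ∉ g • Δ) :
    ∃ g' : G, g' • Δ ⊆ insert x (g • Δ) ∧ g' • Δ ≠ g • Δ := by
  have hx' : g⁻¹ • x ∉ Δ := by
    intro hmem
    exact hx (by simpa using Finset.smul_mem_smul_finset (a := g) hmem)
  obtain ⟨g₀, hsub, hne⟩ := sw_exchange G k Δ h hΔ hx'
  refine ⟨g * g₀, ?_, ?_⟩
  · rw [mul_smul]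
    have := Finset.smul_finset_subset_smul_finset (a := g) hsub
    rwa [Finset.smul_finset_insert, smul_inv_smul] at this
  · intro heq
    apply hne
    have : g⁻¹ • ((g * g₀) • Δ) = g⁻¹ • (g • Δ) := by rw [heq]
    rwa [← mul_smul, ← mul_smul, inv_mul_cancel_left, inv_mul_cancel, one_smul] at this

/-- **Siemons–Wagner.** If `G` is transitive on `Ω` and `Δ` is a `k`-subset (`k ≥ 2`) whose
orbit is longer than the orbit of every `(k+1)`-subset containing it, then either every
2-element subset of `Ω` lies in some `G`-image of `Δ`, or `G` is imprimitive with a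
`G`-invariant block system whose blocks `B` satisfy `1 < |B| < |Ω|`, meet `Δ` in at most one
point, and every 2-element subset with its two points in distinct blocks lies in some
`G`-image of `Δ`. -/
theorem siemons_wagner_dichotomy
    {Ω : Type*} [Fintype Ω] [DecidableEq Ω] (G : Subgroup (Equiv.Perm Ω))
    (hG : IsPretransitive G Ω) (k : ℕ) (hk : 2 ≤ k) (Δ : Finset Ω) (hΔ : Δ.card = k)
    (h : ∀ S : Finset Ω, Δ ⊆ S → S.card = k + 1 →
      Nat.card (orbit G S) < Nat.card (orbit G Δ)) :
    (∀ p : Finset Ω, p.card = 2 → ∃ g : G, p ⊆ g • Δ) ∨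
    (∃ 𝓑 : Set (Set Ω), Setoid.IsPartition 𝓑 ∧
      (∀ (g : G), ∀ B ∈ 𝓑, g • B ∈ 𝓑) ∧
      (∀ B ∈ 𝓑, 1 < B.ncard ∧ B.ncard < Fintype.card Ω) ∧
      (∀ B ∈ 𝓑, (B ∩ (Δ : Set Ω)).ncard ≤ 1) ∧
      (∀ (α β : Ω), ∀ B₁ ∈ 𝓑, ∀ B₂ ∈ 𝓑, B₁ ≠ B₂ → α ∈ B₁ → β ∈ B₂ →
        ∃ g : G, ({α, β} : Finset Ω) ⊆ g • Δ)) := by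
  by_cases hcov : ∀ p : Finset Ω, p.card = 2 → ∃ g : G, p ⊆ g • Δ
  · exact Or.inl hcov
  right
  -- the relation: equal, or no image of Δ contains both
  set r : Ω → Ω → Prop := fun a b => a = b ∨ ¬ ∃ g : G, ({a, b} : Finset Ω) ⊆ g • Δ with hr
  have hsymm : ∀ a b, r a b → r b a := by
    intro a b hab
    rcases hab with rfl | hab
    · exact Or.inl rfl
    · exact Or.inr fun ⟨g, hg⟩ => hab ⟨g, by rwa [Finset.pair_comm]⟩
  have htrans : ∀ a b c, r a b → r b c → r a c := by
    intro a b c hab hbc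
    rcases hab with rfl | hab
    · exact hbc
    rcases hbc with rfl | hbc
    · exact Or.inr hab
    by_cases hac : a = c
    · exact Or.inl hac
    refine Or.inr ?_
    rintro ⟨g, hg⟩
    rw [Finset.insert_subset_iff, Finset.singleton_subset_iff] at hg
    obtain ⟨hag, hcg⟩ := hg
    have hbg : b ∉ g • Δ := fun hbg =>
      hab ⟨g, by rw [Finset.insert_subset_iff, Finset.singleton_subset_iff]; exact ⟨hag, hbg⟩⟩
    obtain ⟨g', hsub, hne⟩ := sw_exchange' G k Δ h hΔ g hbg
    have hcards : (g' • Δ).card = k := by rw [Finset.card_smul_finset, hΔ]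
    have hcardg : (g • Δ).card = k := by rw [Finset.card_smul_finset, hΔ]
    have hbg' : b ∈ g' • Δ := by
      by_contra hb
      apply hne
      apply Finset.eq_of_subset_of_card_le
      · intro y hy
        rcases Finset.mem_insert.mp (hsub hy) with rfl | hy'
        · exact absurd hy hb
        · exact hy'
      · rw [hcards, hcardg]
    have hag' : a ∉ g' • Δ := fun ha =>
      hab ⟨g', by rw [Finset.insert_subset_iff, Finset.singleton_subset_iff]; exact ⟨ha, hbg'⟩⟩
    have hcg' : c ∉ g' • Δ := fun hc =>
      hbc ⟨g', by rw [Finset.insert_subset_iff, Finset.singleton_subset_iff]; exact ⟨hbg', hc⟩⟩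
    -- g' • Δ ⊆ insert b (g • Δ) \ {a, c}, contradiction on cardinalities
    have hsub2 : g' • Δ ⊆ (insert b (g • Δ)) \ ({a, c} : Finset Ω) := by
      intro y hy
      rw [Finset.mem_sdiff]
      refine ⟨hsub hy, ?_⟩
      intro hy'
      rcases Finset.mem_insert.mp hy' with rfl | hy''
      · exact hag' hy
      · rw [Finset.mem_singleton] at hy''; subst hy''; exact hcg' hy
    have hle := Finset.card_le_card hsub2
    have hac' : ({a, c} : Finset Ω) ⊆ insert b (g • Δ) := by
      rw [Finset.insert_subset_iff, Finset.singleton_subset_iff]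
      exact ⟨Finset.mem_insert_of_mem hag, Finset.mem_insert_of_mem hcg⟩
    rw [Finset.card_sdiff_of_subset hac', Finset.card_insert_of_notMem hbg, hcardg,
      Finset.card_insert_of_notMem (by simpa using hac), Finset.card_singleton,
      hcards] at hle
    omega
  set s : Setoid Ω := ⟨r, ⟨fun _ => Or.inl rfl, fun h1 => hsymm _ _ h1,
    fun h1 h2 => htrans _ _ _ h1 h2⟩⟩ with hs
  -- invariance of the relation
  have hinv : ∀ (g : G) (a b : Ω), r a b → r (g • a) (g • b) := by
    intro g a b hab
    rcases hab with rfl | hab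
    · exact Or.inl rfl
    refine Or.inr ?_
    rintro ⟨g', hg'⟩
    apply hab
    refine ⟨g⁻¹ * g', ?_⟩
    intro y hy
    have hy2 : g • y ∈ ({g • a, g • b} : Finset Ω) := by
      rcases Finset.mem_insert.mp hy with rfl | hy'
      · exact Finset.mem_insert_self _ _
      · rw [Finset.mem_singleton] at hy'; subst hy'
        exact Finset.mem_insert_of_mem (Finset.mem_singleton_self _)
    have := hg' hy2
    rw [mul_smul]
    have : g⁻¹ • (g • y) ∈ g⁻¹ • (g' • Δ) := Finset.smul_mem_smul_finset this
    rwa [inv_smul_smul] at this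
  -- the class of a point, and the action on classes
  have hclass_smul : ∀ (g : G) (y : Ω), g • {x | r x y} = {x | r x (g • y)} := by
    intro g y
    ext z
    constructor
    · rintro ⟨w, hw, rfl⟩
      exact hinv g w y hw
    · intro hz
      refine ⟨g⁻¹ • z, ?_, by simp⟩
      have := hinv g⁻¹ _ _ hz
      rwa [inv_smul_smul] at this
  refine ⟨s.classes, Setoid.isPartition_classes s, ?_, ?_, ?_, ?_⟩
  · -- invariance of classes
    rintro g B ⟨y, rfl⟩
    exact ⟨g • y, show g • {x | r x y} = {x | r x (g • y)} from hclass_smul g y⟩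
  · -- sizes of blocks
    -- first produce one class with at least two elements
    push_neg at hcov
    obtain ⟨p, hp2, hpnone⟩ := hcov
    obtain ⟨a, b, hne, rfl⟩ := Finset.card_eq_two.mp hp2
    have hrab : r a b := Or.inr (by simpa using hpnone)
    have hclass2 : ∀ y : Ω, 1 < Set.ncard {x | r x y} := by
      intro y
      obtain ⟨g, hg⟩ := hG.exists_smul_eq b y
      have : {x | r x y} = g • {x | r x b} := by rw [hclass_smul, hg]
      rw [this, Set.ncard_smul_set]
      rw [Set.one_lt_ncard_iff (Set.toFinite _)]
      exact ⟨a, b, hrab, Or.inl rfl, hne⟩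
    have hinter : ∀ y : Ω, ({x | r x y} ∩ (Δ : Set Ω)).ncard ≤ 1 := by
      intro y
      rw [Set.ncard_le_one_iff (Set.toFinite _)]
      rintro u v ⟨hu, huΔ⟩ ⟨hv, hvΔ⟩
      by_contra huv
      have hruv : r u v := htrans _ _ _ hu (hsymm _ _ hv)
      rcases hruv with h' | h'
      · exact huv h'
      · exact h' ⟨1, by
          rw [one_smul, Finset.insert_subset_iff, Finset.singleton_subset_iff]
          exact ⟨huΔ, hvΔ⟩⟩
    rintro B ⟨y, rfl⟩
    refine ⟨hclass2 y, ?_⟩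
    -- there is a point of Δ outside the class
    obtain ⟨d₁, hd1, d₂, hd2, hdne⟩ := Finset.one_lt_card.mp (show 1 < Δ.card by omega)
    have hout : ∃ d, d ∈ Δ ∧ d ∉ {x | r x y} := by
      by_contra hall
      push_neg at hall
      exact hdne ((Set.ncard_le_one_iff (Set.toFinite _)).mp (hinter y)
        ⟨hall d₁ hd1, hd1⟩ ⟨hall d₂ hd2, hd2⟩)
    obtain ⟨d, _, hd⟩ := hout
    have hss : {x | r x y} ⊂ Set.univ := by
      rw [Set.ssubset_univ_iff]
      intro heq
      exact hd (heq ▸ Set.mem_univ d)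
    have h2 := Set.ncard_lt_ncard hss (Set.finite_univ)
    rw [Set.ncard_univ, Nat.card_eq_fintype_card] at h2
    exact h2
  · -- blocks meet Δ in at most one point
    rintro B ⟨y, rfl⟩
    rw [Set.ncard_le_one_iff (Set.toFinite _)]
    rintro u v ⟨hu, huΔ⟩ ⟨hv, hvΔ⟩
    by_contra huv
    rcases htrans _ _ _ hu (hsymm _ _ hv) with h' | h'
    · exact huv h'
    · exact h' ⟨1, by
        rw [one_smul, Finset.insert_subset_iff, Finset.singleton_subset_iff]
        exact ⟨huΔ, hvΔ⟩⟩
  · -- points in distinct blocks are covered by an image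
    rintro α β B₁ hB₁ B₂ hB₂ hne hα hβ
    by_contra hno
    have hrab : r α β := Or.inr hno
    have hβB₁ : β ∈ B₁ := by
      obtain ⟨y, rfl⟩ := hB₁
      exact htrans _ _ _ (hsymm _ _ hrab) hα
    exact hne (Setoid.eq_of_mem_classes hB₁ hβB₁ hB₂ hβ)
end

section
/- Let G be a finite permutation group acting on a finite set Ω of n points, let Σ be a subset of Ω of cardinality k+1 and Δ a subset of Ω of cardinality k with Δ ⊂ Σ. Let d = |{α ∈ Σ : Σ\{α} ∈ Δ^G}| and u = |{β ∈ Ω : Δ ∪ {β} ∈ Σ^G}|. Then d·|Σ^G| = u·|Δ^G|. -/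
open Pointwise MulAction

/-- **Up–down counting lemma.** For a permutation group `G` on a finite set `Ω`, a `k`-subset
`Δ` contained in a `(k+1)`-subset `S`, with `d` the number of points `α ∈ S` with
`S \ {α} ∈ Δ^G` and `u` the number of points `β ∈ Ω` with `Δ ∪ {β} ∈ S^G`, we have
`d·|S^G| = u·|Δ^G|`. -/
theorem up_down_counting
    {Ω : Type*} [Fintype Ω] [DecidableEq Ω] (G : Subgroup (Equiv.Perm Ω))
    (k : ℕ) (Δ S : Finset Ω) (hΔ : Δ.card = k) (hS : S.card = k + 1) (hsub : Δ ⊆ S)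
    (d u : ℕ)
    (hd : d = {α : Ω | α ∈ S ∧ S.erase α ∈ orbit G Δ}.ncard)
    (hu : u = {β : Ω | insert β Δ ∈ orbit G S}.ncard) :
    d * Nat.card (orbit G S) = u * Nat.card (orbit G Δ) := by
  classical
  -- orbit invariance under smul
  have orbmem : ∀ (g : G) (T A : Finset Ω), A ∈ orbit G T → g • A ∈ orbit G T := by
    rintro g T A ⟨h, rfl⟩
    rw [smul_smul]; exact mem_orbit _ _
  have cardorb : ∀ (T A : Finset Ω), A ∈ orbit G T → A.card = T.card := by
    rintro T A ⟨h, rfl⟩; exact Finset.card_smul_finset _ _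
  set OΔ : Finset (Finset Ω) := (orbit G Δ).toFinset with hOΔ
  set OS : Finset (Finset Ω) := (orbit G S).toFinset with hOS
  have memΔ : ∀ A, A ∈ OΔ ↔ A ∈ orbit G Δ := fun A => Set.mem_toFinset
  have memS : ∀ A, A ∈ OS ↔ A ∈ orbit G S := fun A => Set.mem_toFinset
  -- the d-count for every member of the S-orbit
  have key_d : ∀ B ∈ OS, (OΔ.filter (· ⊆ B)).card = d := by
    intro B hB
    rw [memS] at hB
    obtain ⟨g, rfl⟩ := hB
    have step1 : (OΔ.filter (· ⊆ g • S)).card = (OΔ.filter (· ⊆ S)).card := by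
      refine Finset.card_bij' (fun A _ => g⁻¹ • A) (fun A _ => g • A) ?_ ?_
        (fun A _ => smul_inv_smul g A) (fun A _ => inv_smul_smul g A)
      · intro A hA
        simp only [Finset.mem_filter, memΔ] at hA ⊢
        refine ⟨orbmem _ _ _ hA.1, ?_⟩
        have := Finset.smul_finset_subset_smul_finset (a := g⁻¹) hA.2
        rwa [inv_smul_smul] at this
      · intro A hA
        simp only [Finset.mem_filter, memΔ] at hA ⊢
        exact ⟨orbmem _ _ _ hA.1, Finset.smul_finset_subset_smul_finset hA.2⟩
    have step2 : (OΔ.filter (· ⊆ S)).card = (S.filter (fun α => S.erase α ∈ orbit G Δ)).card := by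
      symm
      apply Finset.card_bij (fun α _ => S.erase α)
      · intro α hα
        simp only [Finset.mem_filter, memΔ] at hα ⊢
        exact ⟨hα.2, Finset.erase_subset _ _⟩
      · intro α hα β hβ h
        simp only [Finset.mem_filter] at hα hβ
        by_contra hne
        have : β ∈ S.erase α := Finset.mem_erase.2 ⟨fun hc => hne hc.symm, hβ.1⟩
        rw [h] at this
        exact (Finset.mem_erase.1 this).1 rfl
      · intro A hA
        simp only [Finset.mem_filter, memΔ] at hA
        have hcard : A.card = k := by rw [cardorb _ _ hA.1, hΔ]
        have hdiff : (S \ A).card = 1 := by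
          rw [Finset.card_sdiff_of_subset hA.2, hS, hcard]; omega
        obtain ⟨α, hα⟩ := Finset.card_eq_one.1 hdiff
        have hαS : α ∈ S := by
          have : α ∈ S \ A := hα ▸ Finset.mem_singleton_self α
          exact (Finset.mem_sdiff.1 this).1
        have hAe : S.erase α = A := by
          rw [Finset.erase_eq, ← hα, sdiff_sdiff_eq_self hA.2]
        refine ⟨α, Finset.mem_filter.2 ⟨hαS, ?_⟩, hAe⟩
        rw [hAe]; exact hA.1
    rw [step1, step2, hd]
    have : {α : Ω | α ∈ S ∧ S.erase α ∈ orbit G Δ} =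
        ↑(S.filter (fun α => S.erase α ∈ orbit G Δ)) := by
      ext α; simp
    rw [this, Set.ncard_coe_finset]
  -- the u-count for every member of the Δ-orbit
  have key_u : ∀ A ∈ OΔ, (OS.filter (fun B => A ⊆ B)).card = u := by
    intro A hA
    rw [memΔ] at hA
    obtain ⟨g, rfl⟩ := hA
    have step1 : (OS.filter (fun B => g • Δ ⊆ B)).card
        = (OS.filter (fun B => Δ ⊆ B)).card := by
      refine Finset.card_bij' (fun B _ => g⁻¹ • B) (fun B _ => g • B) ?_ ?_
        (fun B _ => smul_inv_smul g B) (fun B _ => inv_smul_smul g B)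
      · intro B hB
        simp only [Finset.mem_filter, memS] at hB ⊢
        refine ⟨orbmem _ _ _ hB.1, ?_⟩
        have := Finset.smul_finset_subset_smul_finset (a := g⁻¹) hB.2
        rwa [inv_smul_smul] at this
      · intro B hB
        simp only [Finset.mem_filter, memS] at hB ⊢
        refine ⟨orbmem _ _ _ hB.1, ?_⟩
        exact Finset.smul_finset_subset_smul_finset (a := g) hB.2
    have step2 : (OS.filter (fun B => Δ ⊆ B)).card
        = (Finset.univ.filter (fun β : Ω => insert β Δ ∈ orbit G S)).card := by
      symm
      apply Finset.card_bij (fun β _ => insert β Δ)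
      · intro β hβ
        simp only [Finset.mem_filter, memS] at hβ ⊢
        exact ⟨hβ.2, Finset.subset_insert _ _⟩
      · intro β hβ γ hγ h
        simp only [Finset.mem_filter, Finset.mem_univ, true_and] at hβ hγ
        have hβΔ : β ∉ Δ := by
          intro hc
          have := cardorb _ _ hβ
          rw [Finset.insert_eq_self.2 hc, hΔ, hS] at this
          omega
        have : β ∈ insert γ Δ := h ▸ Finset.mem_insert_self β Δ
        rcases Finset.mem_insert.1 this with h' | h'
        · exact h'
        · exact absurd h' hβΔ
      · intro B hB
        simp only [Finset.mem_filter, memS] at hB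
        have hcard : B.card = k + 1 := by rw [cardorb _ _ hB.1, hS]
        have hdiff : (B \ Δ).card = 1 := by
          rw [Finset.card_sdiff_of_subset hB.2, hcard, hΔ]; omega
        obtain ⟨β, hβ⟩ := Finset.card_eq_one.1 hdiff
        have hβB : β ∈ B ∧ β ∉ Δ := by
          have : β ∈ B \ Δ := hβ ▸ Finset.mem_singleton_self β
          exact Finset.mem_sdiff.1 this
        have hBe : insert β Δ = B := by
          apply Finset.eq_of_subset_of_card_le
          · exact Finset.insert_subset hβB.1 hB.2
          · rw [hcard, Finset.card_insert_of_notMem hβB.2, hΔ]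
        refine ⟨β, Finset.mem_filter.2 ⟨Finset.mem_univ _, ?_⟩, hBe⟩
        rw [hBe]; exact hB.1
    rw [step1, step2, hu]
    have : {β : Ω | insert β Δ ∈ orbit G S} =
        ↑(Finset.univ.filter (fun β : Ω => insert β Δ ∈ orbit G S)) := by
      ext β; simp
    rw [this, Set.ncard_coe_finset]
  -- double counting
  have double : OS.card * d = OΔ.card * u := by
    calc OS.card * d = ∑ B ∈ OS, (OΔ.filter (· ⊆ B)).card := by
            rw [Finset.sum_congr rfl key_d, Finset.sum_const, smul_eq_mul]
      _ = ∑ B ∈ OS, ∑ A ∈ OΔ, if A ⊆ B then 1 else 0 := by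
            refine Finset.sum_congr rfl fun B _ => ?_
            rw [Finset.card_filter]
      _ = ∑ A ∈ OΔ, ∑ B ∈ OS, if A ⊆ B then 1 else 0 := Finset.sum_comm
      _ = ∑ A ∈ OΔ, (OS.filter (fun B => A ⊆ B)).card := by
            refine Finset.sum_congr rfl fun A _ => ?_
            rw [Finset.card_filter]
      _ = OΔ.card * u := by
            rw [Finset.sum_congr rfl key_u, Finset.sum_const, smul_eq_mul]
  have hNS : Nat.card (orbit G S) = OS.card := by
    rw [Nat.card_coe_set_eq, Set.ncard_eq_toFinset_card']
  have hNΔ : Nat.card (orbit G Δ) = OΔ.card := by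
    rw [Nat.card_coe_set_eq, Set.ncard_eq_toFinset_card']
  rw [hNS, hNΔ, mul_comm d, mul_comm u, double]
end

section
/- Let G be a primitive permutation group on a finite set Ω and let Δ be a 3-element subset of Ω such that |Δ^G| > |Σ^G| for every 4-element subset Σ of Ω containing Δ. If the setwise stabilizer G_Δ acts transitively on Δ, then G is 3-homogeneous, i.e., G acts transitively on the set of 3-element subsets of Ω. -/
open Pointwise MulAction

/-- A permutation group is primitive if it is transitive and all of its blocks are trivial. -/
def Subgroup.IsPrimitivePermGroup {Ω : Type*} (G : Subgroup (Equiv.Perm Ω)) : Prop :=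
  IsPretransitive G Ω ∧ ∀ B : Set Ω, IsBlock G B → B.Subsingleton ∨ B = Set.univ

section ThreeHomAux

variable {Ω : Type*} [Fintype Ω] [DecidableEq Ω] {G : Subgroup (Equiv.Perm Ω)}

private lemma smul_erase3 (g : G) (s : Finset Ω) (a : Ω) :
    g • s.erase a = (g • s).erase (g • a) := by
  rw [Finset.erase_eq, Finset.erase_eq, Finset.smul_finset_sdiff, Finset.smul_finset_singleton]

private lemma smul_mem_orbit_iff3 (g : G) {T Δ : Finset Ω} :
    g • T ∈ orbit G Δ ↔ T ∈ orbit G Δ := by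
  simp only [mem_orbit_iff]
  constructor
  · rintro ⟨h, hh⟩
    exact ⟨g⁻¹ * h, by rw [mul_smul, hh, inv_smul_smul]⟩
  · rintro ⟨h, hh⟩
    exact ⟨g * h, by rw [mul_smul, hh]⟩

private lemma card_of_mem_orbit3 {T Δ : Finset Ω} (hT : T ∈ orbit G Δ) : T.card = Δ.card := by
  obtain ⟨g, rfl⟩ := mem_orbit_iff.mp hT
  exact Finset.card_smul_finset g Δ

private lemma count_left3 (Δ S : Finset Ω) (g : G) [DecidablePred (· ∈ orbit G Δ)] :
    (((Set.toFinite (orbit G Δ)).toFinset).filter (fun T => T ⊆ g • S)).card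
      = (((Set.toFinite (orbit G Δ)).toFinset).filter (fun T => T ⊆ S)).card := by
  have himg : (((Set.toFinite (orbit G Δ)).toFinset).filter (fun T => T ⊆ S)).image (g • ·)
      = ((Set.toFinite (orbit G Δ)).toFinset).filter (fun T => T ⊆ g • S) := by
    ext T
    simp only [Finset.mem_image, Finset.mem_filter, Set.Finite.mem_toFinset]
    constructor
    · rintro ⟨T₀, ⟨hT₀, hsub⟩, rfl⟩
      exact ⟨(smul_mem_orbit_iff3 g).mpr hT₀,
        Finset.smul_finset_subset_smul_finset_iff.mpr hsub⟩
    · rintro ⟨hT, hsub⟩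
      refine ⟨g⁻¹ • T, ⟨(smul_mem_orbit_iff3 g⁻¹).mpr hT, ?_⟩, smul_inv_smul g T⟩
      rwa [← Finset.smul_finset_subset_smul_finset_iff (a := g), smul_inv_smul]
  rw [← himg, Finset.card_image_of_injective _ (MulAction.injective g)]

private lemma count_right3 (Δ Sig : Finset Ω) (g : G) [DecidablePred (· ∈ orbit G Sig)] :
    (((Set.toFinite (orbit G Sig)).toFinset).filter (fun S => g • Δ ⊆ S)).card
      = (((Set.toFinite (orbit G Sig)).toFinset).filter (fun S => Δ ⊆ S)).card := by
  have himg : (((Set.toFinite (orbit G Sig)).toFinset).filter (fun S => Δ ⊆ S)).image (g • ·)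
      = ((Set.toFinite (orbit G Sig)).toFinset).filter (fun S => g • Δ ⊆ S) := by
    ext S
    simp only [Finset.mem_image, Finset.mem_filter, Set.Finite.mem_toFinset]
    constructor
    · rintro ⟨S₀, ⟨hS₀, hsub⟩, rfl⟩
      exact ⟨(smul_mem_orbit_iff3 g).mpr hS₀,
        Finset.smul_finset_subset_smul_finset_iff.mpr hsub⟩
    · rintro ⟨hS, hsub⟩
      refine ⟨g⁻¹ • S, ⟨(smul_mem_orbit_iff3 g⁻¹).mpr hS, ?_⟩, smul_inv_smul g S⟩
      rwa [← Finset.smul_finset_subset_smul_finset_iff (a := g), smul_inv_smul]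
  rw [← himg, Finset.card_image_of_injective _ (MulAction.injective g)]

private lemma double_count3 (Δ Sig : Finset Ω)
    [DecidablePred (· ∈ orbit G Δ)] [DecidablePred (· ∈ orbit G Sig)] :
    ((Set.toFinite (orbit G Sig)).toFinset).card
        * (((Set.toFinite (orbit G Δ)).toFinset).filter (fun T => T ⊆ Sig)).card
      = ((Set.toFinite (orbit G Δ)).toFinset).card
        * (((Set.toFinite (orbit G Sig)).toFinset).filter (fun S => Δ ⊆ S)).card := by
  classical
  have hL : ∀ S ∈ (Set.toFinite (orbit G Sig)).toFinset,
      (((Set.toFinite (orbit G Δ)).toFinset).filter (fun T => T ⊆ S)).card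
        = (((Set.toFinite (orbit G Δ)).toFinset).filter (fun T => T ⊆ Sig)).card := by
    intro S hS
    obtain ⟨g, rfl⟩ := mem_orbit_iff.mp ((Set.Finite.mem_toFinset _).mp hS)
    exact count_left3 Δ Sig g
  have hR : ∀ T ∈ (Set.toFinite (orbit G Δ)).toFinset,
      (((Set.toFinite (orbit G Sig)).toFinset).filter (fun S => T ⊆ S)).card
        = (((Set.toFinite (orbit G Sig)).toFinset).filter (fun S => Δ ⊆ S)).card := by
    intro T hT
    obtain ⟨g, rfl⟩ := mem_orbit_iff.mp ((Set.Finite.mem_toFinset _).mp hT)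
    exact count_right3 Δ Sig g
  have e1 : ((Set.toFinite (orbit G Sig)).toFinset).card
        * (((Set.toFinite (orbit G Δ)).toFinset).filter (fun T => T ⊆ Sig)).card
      = ∑ S ∈ (Set.toFinite (orbit G Sig)).toFinset,
          (((Set.toFinite (orbit G Δ)).toFinset).filter (fun T => T ⊆ S)).card := by
    rw [Finset.sum_congr rfl hL, Finset.sum_const, smul_eq_mul]
  have e2 : ((Set.toFinite (orbit G Δ)).toFinset).card
        * (((Set.toFinite (orbit G Sig)).toFinset).filter (fun S => Δ ⊆ S)).card
      = ∑ T ∈ (Set.toFinite (orbit G Δ)).toFinset,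
          (((Set.toFinite (orbit G Sig)).toFinset).filter (fun S => T ⊆ S)).card := by
    rw [Finset.sum_congr rfl hR, Finset.sum_const, smul_eq_mul]
  have e3 : ∑ S ∈ (Set.toFinite (orbit G Sig)).toFinset,
          (((Set.toFinite (orbit G Δ)).toFinset).filter (fun T => T ⊆ S)).card
      = ∑ T ∈ (Set.toFinite (orbit G Δ)).toFinset,
          (((Set.toFinite (orbit G Sig)).toFinset).filter (fun S => T ⊆ S)).card := by
    simp_rw [Finset.card_filter]
    exact Finset.sum_comm
  rw [e1, e3, ← e2]

private lemma per_point3 {Δ : Finset Ω} (hΔ : Δ.card = 3)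
    [DecidablePred (· ∈ orbit G Δ)]
    {x : Ω} (hx : x ∉ Δ)
    (hlt : Nat.card (orbit G (insert x Δ)) < Nat.card (orbit G Δ))
    (X : Finset Ω) (hX : ∀ y ∈ X, ∃ g ∈ stabilizer G Δ, g • x = y) :
    X.card ≤ (Δ.filter fun a => insert x (Δ.erase a) ∈ orbit G Δ).card := by
  classical
  have hΔ4 : (insert x Δ).card = 4 := by rw [Finset.card_insert_of_notMem hx, hΔ]
  set finE := (Set.toFinite (orbit G Δ)).toFinset with hfinE
  set finO := (Set.toFinite (orbit G (insert x Δ))).toFinset with hfinO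
  set A := Δ.filter (fun a => insert x (Δ.erase a) ∈ orbit G Δ) with hA
  set n := (finE.filter (fun T => T ⊆ insert x Δ)).card with hn
  set m := (finO.filter (fun S => Δ ⊆ S)).card with hm
  -- X injects into the supersets of Δ inside the orbit of insert x Δ
  have hXnotΔ : ∀ y ∈ X, y ∉ Δ := by
    intro y hy hyΔ
    obtain ⟨g, hg, rfl⟩ := hX y hy
    apply hx
    have hgΔ : g • Δ = Δ := mem_stabilizer_iff.mp hg
    have h2 : g • x ∈ g • Δ := by rw [hgΔ]; exact hyΔ
    exact (Finset.smul_mem_smul_finset_iff g).mp h2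
  have hXm : X.card ≤ m := by
    have himg : X.image (fun y => insert y Δ) ⊆ finO.filter (fun S => Δ ⊆ S) := by
      intro S hS
      simp only [Finset.mem_image] at hS
      obtain ⟨y, hy, rfl⟩ := hS
      obtain ⟨g, hg, rfl⟩ := hX y hy
      refine Finset.mem_filter.mpr ⟨?_, Finset.subset_insert _ _⟩
      rw [hfinO, Set.Finite.mem_toFinset]
      refine mem_orbit_iff.mpr ⟨g, ?_⟩
      rw [Finset.smul_finset_insert, mem_stabilizer_iff.mp hg]
    have hinj : Set.InjOn (fun y => insert y Δ) X := by
      intro y hy z hz hEq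
      have hyΔ := hXnotΔ y hy
      have hEq' : insert y Δ = insert z Δ := hEq
      have : y ∈ insert z Δ := by rw [← hEq']; exact Finset.mem_insert_self y Δ
      rcases Finset.mem_insert.mp this with h' | h'
      · exact h'
      · exact absurd h' hyΔ
    calc X.card = (X.image (fun y => insert y Δ)).card :=
          (Finset.card_image_of_injOn hinj).symm
      _ ≤ m := Finset.card_le_card himg
  -- n = A.card + 1
  have hDE : Δ ∈ orbit G Δ := mem_orbit_self Δ
  have hNset : finE.filter (fun T => T ⊆ insert x Δ)
      = insert Δ (A.image (fun a => insert x (Δ.erase a))) := by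
    ext T
    simp only [Finset.mem_filter, Finset.mem_insert, Finset.mem_image, hA,
      hfinE, Set.Finite.mem_toFinset]
    constructor
    · rintro ⟨hTE, hTsub⟩
      by_cases hTD : T = Δ
      · exact Or.inl hTD
      right
      have hT3 : T.card = 3 := by rw [card_of_mem_orbit3 hTE, hΔ]
      have hxT : x ∈ T := by
        by_contra hxT
        have hsub : T ⊆ Δ := by
          intro t ht
          rcases Finset.mem_insert.mp (hTsub ht) with h' | h'
          · exact absurd (h' ▸ ht) hxT
          · exact h'
        exact hTD (Finset.eq_of_subset_of_card_le hsub (by rw [hΔ, hT3]))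
      have hsd : (Δ \ T).Nonempty := by
        rw [Finset.sdiff_nonempty]
        intro hsub
        exact hTD (Finset.eq_of_subset_of_card_le hsub (by rw [hΔ, hT3])).symm
      obtain ⟨a, ha⟩ := hsd
      have haΔ : a ∈ Δ := (Finset.mem_sdiff.mp ha).1
      have haT : a ∉ T := (Finset.mem_sdiff.mp ha).2
      have hTeq : T = insert x (Δ.erase a) := by
        apply Finset.eq_of_subset_of_card_le
        · intro y hy
          by_cases hyx : y = x
          · rw [hyx]; exact Finset.mem_insert_self x _
          · rcases Finset.mem_insert.mp (hTsub hy) with h' | h'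
            · exact absurd h' hyx
            · exact Finset.mem_insert_of_mem
                (Finset.mem_erase.mpr ⟨fun hya => haT (hya ▸ hy), h'⟩)
        · have hxe : x ∉ Δ.erase a := fun hmem => hx (Finset.mem_of_mem_erase hmem)
          rw [Finset.card_insert_of_notMem hxe, Finset.card_erase_of_mem haΔ, hΔ, hT3]
      exact ⟨a, ⟨haΔ, hTeq ▸ hTE⟩, hTeq.symm⟩
    · rintro (rfl | ⟨a, ⟨haΔ, haE⟩, rfl⟩)
      · exact ⟨hDE, Finset.subset_insert _ _⟩
      · exact ⟨haE, Finset.insert_subset_insert x (Finset.erase_subset a Δ)⟩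
  have hAx : Δ ∉ A.image (fun a => insert x (Δ.erase a)) := by
    simp only [Finset.mem_image]
    rintro ⟨a, ha, hEq⟩
    exact hx (hEq ▸ Finset.mem_insert_self x _)
  have hinj2 : Set.InjOn (fun a => insert x (Δ.erase a)) A := by
    intro a ha b hb hEq
    by_contra hne
    have haΔ : a ∈ Δ := Finset.mem_of_mem_filter a ha
    have hEq' : insert x (Δ.erase a) = insert x (Δ.erase b) := hEq
    have h1 : a ∈ insert x (Δ.erase a) := by
      rw [hEq']
      exact Finset.mem_insert_of_mem (Finset.mem_erase.mpr ⟨hne, haΔ⟩)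
    rcases Finset.mem_insert.mp h1 with h' | h'
    · exact hx (h' ▸ haΔ)
    · exact (Finset.mem_erase.mp h').1 rfl
  have hn_eq : n = A.card + 1 := by
    rw [hn, hNset, Finset.card_insert_of_notMem hAx, Finset.card_image_of_injOn hinj2]
  -- counting
  have hdc : finO.card * n = finE.card * m := double_count3 (G := G) Δ (insert x Δ)
  have hlt' : finO.card < finE.card := by
    have l1 : Nat.card (orbit G Δ) = finE.card := by
      rw [Nat.card_coe_set_eq, Set.ncard_eq_toFinset_card (orbit G Δ) (Set.toFinite _)]
    have l2 : Nat.card (orbit G (insert x Δ)) = finO.card := by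
      rw [Nat.card_coe_set_eq,
        Set.ncard_eq_toFinset_card (orbit G (insert x Δ)) (Set.toFinite _)]
    omega
  have hn1 : 1 ≤ n := by
    refine Finset.card_pos.mpr ⟨Δ, Finset.mem_filter.mpr ⟨?_, Finset.subset_insert _ _⟩⟩
    rw [hfinE, Set.Finite.mem_toFinset]; exact hDE
  have hm1 : 1 ≤ m := by
    refine Finset.card_pos.mpr ⟨insert x Δ, Finset.mem_filter.mpr ⟨?_, Finset.subset_insert _ _⟩⟩
    rw [hfinO, Set.Finite.mem_toFinset]; exact mem_orbit_self _
  have hmn : m < n := by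
    by_contra hge
    push_neg at hge
    have c1 : finO.card * n ≤ finO.card * m := Nat.mul_le_mul_left _ hge
    have c2 : finO.card * m < finE.card * m :=
      (Nat.mul_lt_mul_right (show 0 < m by omega)).mpr hlt'
    omega
  omega

private lemma key_lemma3 {Δ : Finset Ω} (hΔ : Δ.card = 3)
    [DecidablePred (· ∈ orbit G Δ)]
    (h : ∀ S : Finset Ω, Δ ⊆ S → S.card = 4 →
      Nat.card (orbit G S) < Nat.card (orbit G Δ))
    (hstab : ∀ a ∈ Δ, ∀ b ∈ Δ, ∃ g ∈ stabilizer G Δ, g • a = b)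
    {x : Ω} (hx : x ∉ Δ) {a : Ω} (ha : a ∈ Δ) :
    insert x (Δ.erase a) ∈ orbit G Δ := by
  classical
  by_contra hcon
  set A : Ω → Finset Ω :=
    fun y => Δ.filter (fun b => insert y (Δ.erase b) ∈ orbit G Δ) with hAdef
  set X : Finset Ω := Finset.univ.filter (fun y => ∃ g ∈ stabilizer G Δ, g • x = y) with hXdef
  have hmemX : ∀ z, z ∈ X ↔ ∃ g ∈ stabilizer G Δ, g • x = z := by
    intro z
    rw [hXdef, Finset.mem_filter]
    simp only [Finset.mem_univ, true_and]
  have hxX : x ∈ X := (hmemX x).mpr ⟨1, one_mem _, one_smul _ _⟩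
  have hXorb : ∀ y ∈ X, ∀ z, z ∈ X ↔ ∃ g ∈ stabilizer G Δ, g • y = z := by
    intro y hy z
    obtain ⟨gy, hgy, rfl⟩ := (hmemX y).mp hy
    rw [hmemX z]
    constructor
    · rintro ⟨g, hg, rfl⟩
      exact ⟨g * gy⁻¹, mul_mem hg (inv_mem hgy), by rw [mul_smul, inv_smul_smul]⟩
    · rintro ⟨g, hg, rfl⟩
      exact ⟨g * gy, mul_mem hg hgy, by rw [mul_smul]⟩
  have hXnotΔ : ∀ y ∈ X, y ∉ Δ := by
    intro y hy hyΔ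
    obtain ⟨g, hg, rfl⟩ := (hmemX y).mp hy
    apply hx
    have hgΔ : g • Δ = Δ := mem_stabilizer_iff.mp hg
    have h2 : g • x ∈ g • Δ := by rw [hgΔ]; exact hyΔ
    exact (Finset.smul_mem_smul_finset_iff g).mp h2
  have hpp : ∀ y ∈ X, X.card ≤ (A y).card := by
    intro y hy
    have hyΔ := hXnotΔ y hy
    refine per_point3 hΔ hyΔ (h _ (Finset.subset_insert _ _) ?_) X ?_
    · rw [Finset.card_insert_of_notMem hyΔ, hΔ]
    · exact fun z hz => (hXorb y hy z).mp hz
  have hAsub : ∀ y, A y ⊆ Δ := fun y => Finset.filter_subset _ _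
  have hnotmem : ∀ (g : G), g ∈ stabilizer G Δ → (g • a) ∉ A (g • x) := by
    intro g hg hmem
    have h1 : insert (g • x) (Δ.erase (g • a)) ∈ orbit G Δ :=
      (Finset.mem_filter.mp hmem).2
    apply hcon
    have hgΔinv : g⁻¹ • Δ = Δ := mem_stabilizer_iff.mp (inv_mem hg)
    have h2 := (smul_mem_orbit_iff3 g⁻¹).mpr h1
    rwa [Finset.smul_finset_insert, smul_erase3, inv_smul_smul, inv_smul_smul, hgΔinv] at h2
  have hcover : Δ ⊆ X.biUnion (fun y => Δ \ A y) := by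
    intro b hb
    obtain ⟨g, hg, hgab⟩ := hstab a ha b hb
    refine Finset.mem_biUnion.mpr ⟨g • x, (hXorb x hxX (g • x)).mpr ⟨g, hg, rfl⟩,
      Finset.mem_sdiff.mpr ⟨hb, ?_⟩⟩
    rw [← hgab]
    exact hnotmem g hg
  have hk1 : 1 ≤ X.card := Finset.card_pos.mpr ⟨x, hxX⟩
  have hk3 : X.card ≤ 3 :=
    le_trans (hpp x hxX) (by rw [← hΔ]; exact Finset.card_le_card (hAsub x))
  have hterm : ∀ y ∈ X, (Δ \ A y).card ≤ 3 - X.card := by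
    intro y hy
    rw [Finset.card_sdiff_of_subset (hAsub y), hΔ]
    exact Nat.sub_le_sub_left (hpp y hy) 3
  have hfin : (3 : ℕ) ≤ X.card * (3 - X.card) := by
    calc (3 : ℕ) = Δ.card := hΔ.symm
      _ ≤ (X.biUnion (fun y => Δ \ A y)).card := Finset.card_le_card hcover
      _ ≤ ∑ y ∈ X, (Δ \ A y).card := Finset.card_biUnion_le
      _ ≤ ∑ _y ∈ X, (3 - X.card) := Finset.sum_le_sum hterm
      _ = X.card * (3 - X.card) := by rw [Finset.sum_const, smul_eq_mul]
  obtain h' | h' | h' : X.card = 1 ∨ X.card = 2 ∨ X.card = 3 := by omega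
  all_goals rw [h'] at hfin; omega

end ThreeHomAux

/-- If `G` is a primitive group and `Δ` is a 3-subset whose orbit is longer than the orbit of
every 4-subset containing it, and the setwise stabilizer `G_Δ` is transitive on `Δ`, then `G`
is 3-homogeneous. -/
theorem three_homogeneous_of_stabilizer_transitive
    {Ω : Type*} [Fintype Ω] [DecidableEq Ω] (G : Subgroup (Equiv.Perm Ω))
    (hG : G.IsPrimitivePermGroup) (Δ : Finset Ω) (hΔ : Δ.card = 3)
    (h : ∀ S : Finset Ω, Δ ⊆ S → S.card = 4 →
      Nat.card (orbit G S) < Nat.card (orbit G Δ))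
    (hstab : ∀ a ∈ Δ, ∀ b ∈ Δ, ∃ g ∈ stabilizer G Δ, g • a = b) :
    ∀ Δ₁ Δ₂ : Finset Ω, Δ₁.card = 3 → Δ₂.card = 3 → ∃ g : G, g • Δ₁ = Δ₂ := by
  classical
  intro Δ₁ Δ₂ h1 h2
  have key : ∀ T ∈ orbit G Δ, ∀ x ∉ T, ∀ a ∈ T, insert x (T.erase a) ∈ orbit G Δ := by
    intro T hT x hxT a haT
    obtain ⟨g, rfl⟩ := mem_orbit_iff.mp hT
    have hx0 : g⁻¹ • x ∉ Δ := by
      intro hmem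
      apply hxT
      have h3 : g • (g⁻¹ • x) ∈ g • Δ := (Finset.smul_mem_smul_finset_iff g).mpr hmem
      rwa [smul_inv_smul] at h3
    have ha0 : g⁻¹ • a ∈ Δ := by
      have h3 : g⁻¹ • a ∈ g⁻¹ • (g • Δ) := (Finset.smul_mem_smul_finset_iff g⁻¹).mpr haT
      rwa [inv_smul_smul] at h3
    have hmem := key_lemma3 hΔ h hstab hx0 ha0
    have h4 := (smul_mem_orbit_iff3 g).mpr hmem
    rwa [Finset.smul_finset_insert, smul_erase3, smul_inv_smul, smul_inv_smul] at h4
  have hall : ∀ d (T' T : Finset Ω), T' ∈ orbit G Δ → T.card = 3 → (T \ T').card = d →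
      T ∈ orbit G Δ := by
    intro d
    induction d with
    | zero =>
      intro T' T hT' hT3 hd
      have hsub : T ⊆ T' := by rwa [← Finset.sdiff_eq_empty_iff_subset, ← Finset.card_eq_zero]
      have hEq : T = T' :=
        Finset.eq_of_subset_of_card_le hsub (by rw [card_of_mem_orbit3 hT', hΔ, hT3])
      rwa [hEq]
    | succ d ih =>
      intro T' T hT' hT3 hd
      have hT'3 : T'.card = 3 := by rw [card_of_mem_orbit3 hT', hΔ]
      have hne : (T \ T').Nonempty := by rw [← Finset.card_pos, hd]; omega
      obtain ⟨xx, hxx⟩ := hne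
      have hne' : (T' \ T).Nonempty := by
        rw [← Finset.card_pos, Finset.card_sdiff_comm (by rw [hT'3, hT3]), hd]
        omega
      obtain ⟨aa, haa⟩ := hne'
      have hxxT : xx ∈ T := (Finset.mem_sdiff.mp hxx).1
      have hxxT' : xx ∉ T' := (Finset.mem_sdiff.mp hxx).2
      have haaT' : aa ∈ T' := (Finset.mem_sdiff.mp haa).1
      have haaT : aa ∉ T := (Finset.mem_sdiff.mp haa).2
      have hT'' := key T' hT' xx hxxT' aa haaT'
      apply ih _ T hT'' hT3
      have hsd : T \ insert xx (T'.erase aa) = (T \ T').erase xx := by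
        ext y
        simp only [Finset.mem_sdiff, Finset.mem_insert, Finset.mem_erase, not_or, not_and]
        constructor
        · rintro ⟨hyT, hyx, hy2⟩
          exact ⟨hyx, hyT, fun hyT' => (hy2 (fun hyaa => haaT (hyaa ▸ hyT))) hyT'⟩
        · rintro ⟨hyx, hyT, hyT'⟩
          exact ⟨hyT, hyx, fun _ hmem => hyT' hmem⟩
      rw [hsd, Finset.card_erase_of_mem (Finset.mem_sdiff.mpr ⟨hxxT, hxxT'⟩), hd]
      omega
  have hO1 : Δ₁ ∈ orbit G Δ := hall (Δ₁ \ Δ).card Δ Δ₁ (mem_orbit_self Δ) h1 rfl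
  have hO2 : Δ₂ ∈ orbit G Δ := hall (Δ₂ \ Δ).card Δ Δ₂ (mem_orbit_self Δ) h2 rfl
  obtain ⟨g₁, hg₁⟩ := mem_orbit_iff.mp hO1
  obtain ⟨g₂, hg₂⟩ := mem_orbit_iff.mp hO2
  refine ⟨g₂ * g₁⁻¹, ?_⟩
  rw [← hg₁, ← mul_smul, mul_assoc, inv_mul_cancel, mul_one]
  exact hg₂
end
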